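/- arXiv:1511.05091 — 2 statements merged into one kernel-verified Lean document; each statement's English description precedes it below -/
import Mathlib

section
/- Let ζ_j be a real zero of Ai. Then Im(A₋'(ζ_j)/A₋(ζ_j)) = −1/(8π²·|A₋(ζ_j)|³·|Ai'(ζ_j)|). -/
/-!
`Ai` and its rotations `A₋ = Ai(ω ·)`, `A₊ = Ai(ω² ·)`, `ω = e^{2πi/3}`, all solve `y'' = z y`,
so their Wronskians are constant and can be read off at `0` from
`Ai(0) Ai'(0) = -1/(2π√3)` (reflection formula for `Γ`):
`W(Ai, A₋) = (ω - 1) Ai(0) Ai'(0)` has modulus `1/(2π)` and `W(A₋, A₊) = i/(2π)`.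
At a zero `ζ` of `Ai` the first Wronskian is `-Ai'(ζ) A₋(ζ)`, so `|Ai'(ζ)| |A₋(ζ)| = 1/(2π)`.
Since `Ai` is real on `ℝ`, `A₊ = conj A₋` and `A₊' = conj A₋'` there, so the second one says
`Im(A₋' · conj A₋) = -1/(4π)` on `ℝ`, i.e. `Im(A₋'/A₋) = -1/(4π |A₋|²)`; the first identity turns
`1/(4π |A₋(ζ)|²)` into `1/(8π² |A₋(ζ)|³ |Ai'(ζ)|)`.
-/

open Complex ComplexConjugate

section LinearODE

variable {𝕜 : Type*} [RCLike 𝕜] {q f f' g g' : 𝕜 → 𝕜}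

/-- `f` solves `y'' = q y`, with `f'` as its derivative. -/
def SolvesODE (q f f' : 𝕜 → 𝕜) : Prop :=
  ∀ z, HasDerivAt f (f' z) z ∧ HasDerivAt f' (q z * f z) z

def wronskian (f f' g g' : 𝕜 → 𝕜) (z : 𝕜) : 𝕜 :=
  f z * g' z - f' z * g z

theorem SolvesODE.wronskian_eq (hf : SolvesODE q f f') (hg : SolvesODE q g g') (x y : 𝕜) :
    wronskian f f' g g' x = wronskian f f' g g' y := by
  have hW : ∀ z, HasDerivAt (wronskian f f' g g') 0 z := fun z =>
    (((hf z).1.mul (hg z).2).sub ((hf z).2.mul (hg z).1)).congr_deriv (by ring)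
  exact is_const_of_deriv_eq_zero (fun z => (hW z).differentiableAt) (fun z => (hW z).deriv) x y

theorem SolvesODE.comp_const_mul (hf : SolvesODE q f f') (c : 𝕜) :
    SolvesODE (fun z => c ^ 2 * q (c * z)) (fun z => f (c * z)) (fun z => c * f' (c * z)) :=
  fun z => by
    have hc : HasDerivAt (fun w => c * w) c z := by simpa using (hasDerivAt_id z).const_mul c
    exact ⟨((hf (c * z)).1.comp z hc).congr_deriv (mul_comm _ _),
      (((hf (c * z)).2.comp z hc).const_mul c).congr_deriv (by ring)⟩

end LinearODE

theorem solvesODE_deriv_of_differentiable {q f : ℂ → ℂ} (hf : Differentiable ℂ f)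
    (hode : ∀ z, deriv (deriv f) z = q z * f z) : SolvesODE q f (deriv f) :=
  fun z => ⟨(hf z).hasDerivAt, hode z ▸ (hf.deriv z).hasDerivAt⟩

theorem deriv_conj_of_forall_conj_eq {f : ℂ → ℂ} (hf : ∀ z, f (conj z) = conj (f z)) (z : ℂ) :
    deriv f (conj z) = conj (deriv f z) := by
  have hsymm : conj ∘ f ∘ conj = f := funext fun w => by simp [hf]
  simpa [hsymm] using congrFun (deriv_conj_conj (f := f)) (conj z)

section Airy

variable {f f' : ℂ → ℂ}

theorem SolvesODE.comp_mul_of_pow_three_eq_one (hf : SolvesODE (fun z => z) f f') {c : ℂ}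
    (hc : c ^ 3 = 1) :
    SolvesODE (fun z => z) (fun z => f (c * z)) (fun z => c * f' (c * z)) := by
  convert hf.comp_const_mul c using 2 with z
  linear_combination (-z) * hc

theorem wronskian_comp_mul_of_pow_three_eq_one (hf : SolvesODE (fun z => z) f f') {c₁ c₂ : ℂ}
    (hc₁ : c₁ ^ 3 = 1) (hc₂ : c₂ ^ 3 = 1) (z : ℂ) :
    wronskian (fun z => f (c₁ * z)) (fun z => c₁ * f' (c₁ * z))
      (fun z => f (c₂ * z)) (fun z => c₂ * f' (c₂ * z)) z = (c₂ - c₁) * (f 0 * f' 0) := by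
  rw [(hf.comp_mul_of_pow_three_eq_one hc₁).wronskian_eq
    (hf.comp_mul_of_pow_three_eq_one hc₂) z 0]
  simp only [wronskian, mul_zero]
  ring

theorem one_div_three_rpow_mul_Gamma_mul_neg_one_div :
    1 / ((3 : ℝ) ^ ((2 : ℝ) / 3) * Real.Gamma (2 / 3))
      * -(1 / ((3 : ℝ) ^ ((1 : ℝ) / 3) * Real.Gamma (1 / 3))) = -(1 / (2 * Real.pi * √3)) := by
  have h3 : (3 : ℝ) ^ ((2 : ℝ) / 3) * 3 ^ ((1 : ℝ) / 3) = 3 := by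
    rw [← Real.rpow_add (by norm_num)]
    norm_num
  have hΓ : Real.Gamma (1 / 3) * Real.Gamma (2 / 3) = 2 * Real.pi / √3 := by
    rw [show (2 : ℝ) / 3 = 1 - 1 / 3 by norm_num, Real.Gamma_mul_Gamma_one_sub,
      show Real.pi * (1 / 3) = Real.pi / 3 by ring, Real.sin_pi_div_three]
    field_simp
  rw [mul_neg, neg_inj, div_mul_div_comm, one_mul]
  congr 1
  calc _ = ((3 : ℝ) ^ ((2 : ℝ) / 3) * 3 ^ ((1 : ℝ) / 3)) *
        (Real.Gamma (1 / 3) * Real.Gamma (2 / 3)) := by ring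
    _ = 2 * Real.pi * √3 := by
      rw [h3, hΓ]
      field_simp
      rw [Real.sq_sqrt (by norm_num)]

end Airy

theorem im_div_eq_of_norm_mul_norm_eq {a B d : ℂ} (hnorm : ‖a‖ * ‖B‖ = 1 / (2 * Real.pi))
    (him : (d * conj B).im = -1 / (4 * Real.pi)) :
    (d / B).im = -1 / (8 * Real.pi ^ 2 * ‖B‖ ^ 3 * ‖a‖) := by
  have hB : ‖B‖ ≠ 0 := by
    rintro h
    rw [h, mul_zero] at hnorm
    simp [Real.pi_ne_zero] at hnorm
  have ha : ‖a‖ = 1 / (2 * Real.pi * ‖B‖) := by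
    rw [eq_div_iff (by positivity)]
    field_simp at hnorm
    linear_combination hnorm
  rw [div_eq_mul_inv, inv_def, ← mul_assoc, im_mul_ofReal, him, normSq_eq_norm_sq, ha]
  field_simp
  ring

section CubeRootOfUnity

theorem exp_two_pi_mul_I_div_three :
    exp (2 * Real.pi * I / 3) = (-1 + √3 * I) / 2 := by
  rw [show (2 * Real.pi * I / 3 : ℂ) = ((Real.pi - Real.pi / 3 : ℝ) : ℂ) * I by push_cast; ring,
    exp_mul_I, ← ofReal_cos, ← ofReal_sin, Real.cos_pi_sub, Real.sin_pi_sub,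
    Real.cos_pi_div_three, Real.sin_pi_div_three]
  push_cast
  ring

local notation "ω" => exp (2 * (Real.pi : ℂ) * I / 3)

theorem exp_two_pi_mul_I_div_three_pow_three : ω ^ 3 = 1 := by
  rw [← exp_nat_mul, show ((3 : ℕ) : ℂ) * (2 * Real.pi * I / 3) = 2 * Real.pi * I by push_cast; ring,
    exp_two_pi_mul_I]

theorem exp_two_pi_mul_I_div_three_sq : ω ^ 2 = (-1 - √3 * I) / 2 := by
  have h3 : ((√3 : ℝ) : ℂ) ^ 2 = 3 := by rw [← ofReal_pow, Real.sq_sqrt (by norm_num)]; norm_num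
  rw [exp_two_pi_mul_I_div_three]
  linear_combination ((√3 : ℂ) ^ 2 / 4) * I_sq - (1 / 4 : ℂ) * h3

theorem conj_exp_two_pi_mul_I_div_three : conj ω = ω ^ 2 := by
  rw [exp_two_pi_mul_I_div_three_sq, exp_two_pi_mul_I_div_three]
  simp [map_div₀, map_ofNat]
  ring

theorem exp_two_pi_mul_I_div_three_sq_sub_self : ω ^ 2 - ω = -(√3 * I) := by
  rw [exp_two_pi_mul_I_div_three_sq, exp_two_pi_mul_I_div_three]
  ring

theorem norm_exp_two_pi_mul_I_div_three_sub_one : ‖ω - 1‖ = √3 := by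
  rw [exp_two_pi_mul_I_div_three, norm_def, normSq_apply]
  congr 1
  simp
  ring_nf
  norm_num

theorem im_mul_div_eq_of_wronskian_eq {a B c : ℂ}
    (h₁ : -(a * B) = (ω - 1) * ((-(1 / (2 * Real.pi * √3)) : ℝ) : ℂ))
    (h₂ : B * (ω ^ 2 * conj c) - ω * c * conj B
      = (ω ^ 2 - ω) * ((-(1 / (2 * Real.pi * √3)) : ℝ) : ℂ)) :
    (ω * c / B).im = -1 / (8 * Real.pi ^ 2 * ‖B‖ ^ 3 * ‖a‖) := by
  apply im_div_eq_of_norm_mul_norm_eq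
  · rw [← norm_mul, ← norm_neg, h₁, norm_mul, norm_exp_two_pi_mul_I_div_three_sub_one, norm_real,
      Real.norm_eq_abs, abs_neg, abs_of_pos (by positivity)]
    field_simp
  · set Z := ω * c * conj B
    have hZ : B * (ω ^ 2 * conj c) - Z = -(Z - conj Z) := by
      simp only [Z, map_mul, conj_conj, conj_exp_two_pi_mul_I_div_three]
      ring
    rw [hZ, sub_conj, exp_two_pi_mul_I_div_three_sq_sub_self] at h₂
    have h := congrArg im h₂
    simp at h
    field_simp at h ⊢
    rw [Real.sq_sqrt (by norm_num)] at h
    linarith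

end CubeRootOfUnity

/-- If `ζ` is a real zero of the Airy function `Ai`, then
`Im(A₋'(ζ)/A₋(ζ)) = −1/(8π²·|A₋(ζ)|³·|Ai'(ζ)|)`, where `A₋(z) = Ai(e^{2πi/3}z)`.  Here `Ai`
is the entire Airy function, real on the reals, satisfying `Ai'' = z·Ai` with the standard
values at `0`. -/
theorem airy_Aminus_log_deriv_at_zero
    (Ai : ℂ → ℂ)
    (hD : Differentiable ℂ Ai)
    (hode : ∀ z : ℂ, deriv (deriv Ai) z = z * Ai z)
    (hconj : ∀ z : ℂ, Ai (starRingEnd ℂ z) = starRingEnd ℂ (Ai z))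
    (hAi0 : Ai 0 = ((1 / ((3:ℝ) ^ ((2:ℝ)/3) * Real.Gamma (2/3)) : ℝ) : ℂ))
    (hAi'0 : deriv Ai 0 = ((-(1 / ((3:ℝ) ^ ((1:ℝ)/3) * Real.Gamma (1/3))) : ℝ) : ℂ))
    (ζ : ℝ) (hζ : Ai (ζ : ℂ) = 0) :
    ((deriv (fun w => Ai (Complex.exp (2 * (Real.pi : ℂ) * I / 3) * w)) (ζ : ℂ))
        / Ai (Complex.exp (2 * (Real.pi : ℂ) * I / 3) * ζ)).im
      = -1 / (8 * Real.pi ^ 2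
          * ‖Ai (Complex.exp (2 * (Real.pi : ℂ) * I / 3) * ζ)‖ ^ 3
          * ‖deriv Ai (ζ : ℂ)‖) := by
  set ω := exp (2 * (Real.pi : ℂ) * I / 3)
  have hω3 : ω ^ 3 = 1 := exp_two_pi_mul_I_div_three_pow_three
  have hAi : SolvesODE (fun z => z) Ai (deriv Ai) := solvesODE_deriv_of_differentiable hD hode
  have hκ : Ai 0 * deriv Ai 0 = ((-(1 / (2 * Real.pi * √3)) : ℝ) : ℂ) := by
    rw [hAi0, hAi'0, ← ofReal_mul, one_div_three_rpow_mul_Gamma_mul_neg_one_div]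
  have hW₁ := wronskian_comp_mul_of_pow_three_eq_one hAi (one_pow 3) hω3 ζ
  have hW₂ := wronskian_comp_mul_of_pow_three_eq_one hAi hω3
    (by rw [← pow_mul, pow_mul', hω3, one_pow] : (ω ^ 2) ^ 3 = 1) ζ
  have hconjζ : conj (ω * ζ) = ω ^ 2 * ζ := by
    rw [map_mul, conj_exp_two_pi_mul_I_div_three, conj_ofReal]
  simp only [wronskian, one_mul, hζ, zero_mul, zero_sub, hκ] at hW₁ hW₂
  rw [← hconjζ, hconj, deriv_conj_of_forall_conj_eq hconj] at hW₂
  rw [((hAi.comp_const_mul ω) ζ).1.deriv]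
  exact im_mul_div_eq_of_wronskian_eq hW₁ hW₂
end

section
/- Newton–Kantorovich type lemma: Let z₀ ∈ ℂ, ε > 0, and let f be analytic on the closed disc Ω = {z : |z − z₀| ≤ ε}. Suppose |f(z₀)| ≤ a, |f'(z₀)| ≥ b, and sup_{z ∈ Ω} |f''(z)| ≤ d. If a + d·ε² < ε·b and ε·b < 1, then f has a unique zero in Ω. -/
/-!
With `c = f'(z₀)`, the Newton map `N z = z - f z / c` has derivative `(c - f'(z)) / c`, and
`|f'(z) - c| ≤ d ε` on the disc by the bound on `f''`; so `N` is Lipschitz with constant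
`d ε / |c| < 1` there. As `|N z₀ - z₀| ≤ a / b`, the hypothesis `a + d ε² < ε b` makes `N` map the
disc into itself, and Banach's fixed point theorem gives exactly one fixed point of `N`, that is,
exactly one zero of `f`, in the disc.
-/

open Metric Set NNReal Function

theorem existsUnique_isFixedPt_of_lipschitzOnWith {α : Type*} [MetricSpace α] {s : Set α}
    {T : α → α} {K : ℝ≥0} (hs : IsComplete s) (hne : s.Nonempty) (hK : K < 1)
    (hmaps : MapsTo T s s) (hT : LipschitzOnWith K T s) :
    ∃! x, x ∈ s ∧ IsFixedPt T x := by
  have hcontr : ContractingWith K (hmaps.restrict T s s) := ⟨hK, hT.mapsToRestrict hmaps⟩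
  obtain ⟨x₀, hx₀⟩ := hne
  obtain ⟨x, hxs, hx, -⟩ := hcontr.exists_fixedPoint' hs hmaps hx₀ (edist_ne_top _ _)
  refine ⟨x, ⟨hxs, hx⟩, fun y ⟨hys, hy⟩ => ?_⟩
  have : (⟨y, hys⟩ : s) = ⟨x, hxs⟩ :=
    hcontr.fixedPoint_unique' (Subtype.ext hy) (Subtype.ext hx)
  exact congrArg Subtype.val this

theorem LipschitzOnWith.mapsTo_closedBall {α : Type*} [PseudoMetricSpace α] {T : α → α}
    {K : ℝ≥0} {x₀ : α} {r : ℝ} (hT : LipschitzOnWith K T (closedBall x₀ r))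
    (h : dist (T x₀) x₀ + K * r ≤ r) :
    MapsTo T (closedBall x₀ r) (closedBall x₀ r) := by
  intro x hx
  have hr : 0 ≤ r := dist_nonneg.trans (mem_closedBall.1 hx)
  have hTx := hT.dist_le_mul x hx x₀ (mem_closedBall_self hr)
  rw [mem_closedBall] at hx ⊢
  calc dist (T x) x₀ ≤ dist (T x) (T x₀) + dist (T x₀) x₀ := dist_triangle _ _ _
    _ ≤ K * dist x x₀ + dist (T x₀) x₀ := by gcongr
    _ ≤ K * r + dist (T x₀) x₀ := by gcongr
    _ ≤ r := by linarith

section Newton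

variable {𝕜 : Type*} [RCLike 𝕜]

def newtonMap (f : 𝕜 → 𝕜) (c : 𝕜) (z : 𝕜) : 𝕜 := z - f z / c

theorem isFixedPt_newtonMap_iff {f : 𝕜 → 𝕜} {c : 𝕜} (hc : c ≠ 0) {z : 𝕜} :
    IsFixedPt (newtonMap f c) z ↔ f z = 0 := by
  simp [IsFixedPt, newtonMap, hc]

theorem dist_newtonMap_self (f : 𝕜 → 𝕜) (c z : 𝕜) :
    dist (newtonMap f c z) z = ‖f z‖ / ‖c‖ := by
  simp [newtonMap]

theorem lipschitzOnWith_newtonMap {f : 𝕜 → 𝕜} {s : Set 𝕜} {c : 𝕜} {L : ℝ≥0}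
    (hs : Convex ℝ s) (hf : ∀ z ∈ s, DifferentiableAt 𝕜 f z) (hc : c ≠ 0)
    (hL : ∀ z ∈ s, ‖deriv f z - c‖ ≤ L) :
    LipschitzOnWith (L / ‖c‖₊) (newtonMap f c) s := by
  refine hs.lipschitzOnWith_of_nnnorm_hasDerivWithin_le (fun z hz =>
    ((hasDerivAt_id z).sub ((hf z hz).hasDerivAt.div_const c)).hasDerivWithinAt) fun z hz => ?_
  rw [← NNReal.coe_le_coe, coe_nnnorm, NNReal.coe_div, coe_nnnorm, one_sub_div hc,
    norm_div, norm_sub_rev]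
  gcongr
  exact hL z hz

end Newton

theorem newton_unique_zero_general
    (f : ℂ → ℂ) (z₀ : ℂ) (ε a b d : ℝ) (hε : 0 < ε)
    (hf : AnalyticOnNhd ℂ f (closedBall z₀ ε))
    (ha : ‖f z₀‖ ≤ a)
    (hb : b ≤ ‖deriv f z₀‖)
    (hd : ∀ z ∈ closedBall z₀ ε, ‖deriv (deriv f) z‖ ≤ d)
    (h1 : a + d * ε ^ 2 < ε * b) :
    ∃! z, z ∈ closedBall z₀ ε ∧ f z = 0 := by
  set c := deriv f z₀
  have hz₀ : z₀ ∈ closedBall z₀ ε := mem_closedBall_self hε.le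
  have hd0 : 0 ≤ d := (norm_nonneg _).trans (hd z₀ hz₀)
  have hc : 0 < ‖c‖ := by nlinarith [norm_nonneg (f z₀)]
  have hc₀ : c ≠ 0 := norm_pos_iff.1 hc
  let L : ℝ≥0 := ⟨d * ε, by positivity⟩
  have hslope : ∀ z ∈ closedBall z₀ ε, ‖deriv f z - c‖ ≤ L := by
    intro z hz
    have := (convex_closedBall z₀ ε).norm_image_sub_le_of_norm_deriv_le
      (fun w hw => (hf.deriv w hw).differentiableAt) hd hz₀ hz
    change _ ≤ d * ε
    nlinarith [mem_closedBall.1 hz, dist_eq_norm z z₀]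
  have hlip := lipschitzOnWith_newtonMap (convex_closedBall z₀ ε)
    (fun z hz => (hf z hz).differentiableAt) hc₀ hslope
  have hK : ((L / ‖c‖₊ : ℝ≥0) : ℝ) = d * ε / ‖c‖ := rfl
  have hKlt : L / ‖c‖₊ < 1 := by
    rw [← NNReal.coe_lt_coe, hK, NNReal.coe_one, div_lt_one hc]
    nlinarith [norm_nonneg (f z₀)]
  have hmaps := hlip.mapsTo_closedBall (by
    rw [hK, dist_newtonMap_self, div_mul_eq_mul_div, ← add_div, div_le_iff₀ hc]
    nlinarith)
  simpa only [isFixedPt_newtonMap_iff hc₀] using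
    existsUnique_isFixedPt_of_lipschitzOnWith isClosed_closedBall.isComplete ⟨z₀, hz₀⟩ hKlt
      hmaps hlip

/-- Newton–Kantorovich type lemma: if `f` is analytic on the closed disc
`Ω = {z : |z − z₀| ≤ ε}`, `|f(z₀)| ≤ a`, `|f'(z₀)| ≥ b`, `sup_Ω |f''| ≤ d`, and
`a + d·ε² < ε·b < 1`, then `f` has a unique zero in `Ω`. -/
theorem newton_unique_zero
    (f : ℂ → ℂ) (z₀ : ℂ) (ε a b d : ℝ) (hε : 0 < ε)
    (hf : AnalyticOnNhd ℂ f (closedBall z₀ ε))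
    (ha : ‖f z₀‖ ≤ a)
    (hb : b ≤ ‖deriv f z₀‖)
    (hd : ∀ z ∈ closedBall z₀ ε, ‖deriv (deriv f) z‖ ≤ d)
    (h1 : a + d * ε ^ 2 < ε * b) (h2 : ε * b < 1) :
    ∃! z, z ∈ closedBall z₀ ε ∧ f z = 0 :=
  newton_unique_zero_general f z₀ ε a b d hε hf ha hb hd h1
end
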